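/- Validity of Powerset: let A be a complete Heyting algebra and u an A-name. Define the A-name w with dom(w) = {f : f is a function from dom(u) to A} and w(f) = ‖∀y(y∈f → y∈u)‖. Then for every A-name v, ‖v ∈ w‖ = ‖∀y(y∈v → y∈u)‖; in particular ‖∀z(z∈w ↔ ∀y(y∈z → y∈u))‖ = 1, so the Powerset axiom ∀x∃w∀z(z∈w ↔ ∀y∈z(y∈x)) is valid in V^A. -/

import Mathlib

universe u

/-- The universe `V^A` of `A`-names over a complete Heyting algebra `A`:
an `A`-name is a function from a set (of previously constructed `A`-names)
into `A`, here encoded by an indexing type `ι`, a family `elts` of names and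
the family `val` of their attached truth values. -/
inductive HName (A : Type u) : Type (u + 1) where
  | mk (ι : Type u) (elts : ι → HName A) (val : ι → A)

namespace HName

variable {A : Type u}

/-- The indexing type of (the domain of) a name. -/
def ι : HName A → Type u
  | mk ι _ _ => ι

/-- The members of (the domain of) a name. -/
def elts : (u : HName A) → u.ι → HName A
  | mk _ e _ => e

/-- The values attached by a name to the members of its domain. -/
def val : (u : HName A) → u.ι → A
  | mk _ _ v => v

/-- Ordinal rank of a name (used for the recursive definition of truth values). -/
noncomputable def rank : HName A → Ordinal.{u}
  | mk _ e _ => Ordinal.lsub fun i => (e i).rank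

theorem rank_lt {ι : Type u} (e : ι → HName A) (v : ι → A) (i : ι) :
    (e i).rank < (mk ι e v).rank := Ordinal.lt_lsub _ i

variable [Order.Frame A]

/-- The truth value `‖u ≈ v‖` of equality of two names, defined by the recursion
`‖u ≈ v‖ = ⨅_{x ∈ dom u} (u(x) ⇨ ‖x ∈ v‖) ⊓ ⨅_{y ∈ dom v} (v(y) ⇨ ‖y ∈ u‖)`,
where `‖x ∈ v‖ = ⨆_{y ∈ dom v} (v(y) ⊓ ‖y ≈ x‖)` is inlined. -/
noncomputable def eqVal : HName A → HName A → A
  | mk ι e a, mk κ f b =>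
      (⨅ i, a i ⇨ ⨆ j, b j ⊓ eqVal (f j) (e i)) ⊓
      (⨅ j, b j ⇨ ⨆ i, a i ⊓ eqVal (e i) (f j))
termination_by u v => max u.rank v.rank
decreasing_by
  · exact max_lt ((rank_lt f b j).trans_le (le_max_right _ _))
      ((rank_lt e a i).trans_le (le_max_left _ _))
  · exact max_lt ((rank_lt e a i).trans_le (le_max_left _ _))
      ((rank_lt f b j).trans_le (le_max_right _ _))

/-- The truth value `‖u ∈ v‖ = ⨆_{x ∈ dom v} (v(x) ⊓ ‖x ≈ u‖)` of membership. -/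
noncomputable def memVal (u v : HName A) : A :=
  ⨆ j : v.ι, v.val j ⊓ eqVal (v.elts j) u

end HName

/-!
Every name `v` is, to degree `‖v ⊆ u‖`, equal to `u ∩ v`, the name with the domain of `u` and
values `u(x) ⊓ ‖x ∈ v‖`; since `u ∩ v` is itself in the domain of the powerset name `w`, with value
`‖u ∩ v ⊆ u‖ = ⊤`, this gives `‖v ⊆ u‖ ≤ ‖v ∈ w‖`. Conversely `‖v ∈ w‖ ≤ ‖v ⊆ u‖` because `⊆`
respects `≈`, which comes down to the transitivity of `≈`.
-/

namespace HName

variable {A : Type u} [Order.Frame A]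

theorem eqVal_eq (x y : HName A) :
    eqVal x y = (⨅ i, x.val i ⇨ memVal (x.elts i) y) ⊓ (⨅ j, y.val j ⇨ memVal (y.elts j) x) := by
  obtain ⟨ι, e, a⟩ := x
  obtain ⟨κ, f, b⟩ := y
  rw [eqVal]
  rfl

theorem eqVal_comm (x y : HName A) : eqVal x y = eqVal y x := by
  rw [eqVal_eq, eqVal_eq y, inf_comm]

theorem val_inf_eqVal_le_memVal (x y : HName A) (j : y.ι) :
    y.val j ⊓ eqVal (y.elts j) x ≤ memVal x y :=
  le_iSup (fun j => y.val j ⊓ eqVal (y.elts j) x) j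

theorem eqVal_inf_val_le_memVal (x y : HName A) (i : x.ι) :
    eqVal x y ⊓ x.val i ≤ memVal (x.elts i) y := by
  rw [← le_himp_iff, eqVal_eq]
  exact inf_le_left.trans (iInf_le _ i)

theorem eqVal_self (x : HName A) : eqVal x x = ⊤ := by
  induction x with
  | mk κ e a ih =>
    rw [eqVal_eq, inf_idem, eq_top_iff]
    refine le_iInf fun i => le_himp_iff.mpr ?_
    rw [top_inf_eq]
    calc a i = a i ⊓ eqVal (e i) (e i) := by rw [ih i, inf_top_eq]
      _ ≤ memVal (e i) (mk κ e a) := val_inf_eqVal_le_memVal (e i) (mk κ e a) i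

theorem val_le_memVal (x : HName A) (i : x.ι) : x.val i ≤ memVal (x.elts i) x := by
  simpa [eqVal_self] using val_inf_eqVal_le_memVal (x.elts i) x i

theorem eqVal_inf_memVal_le_of_trans {w y z : HName A}
    (h : ∀ j k, eqVal (z.elts k) (y.elts j) ⊓ eqVal (y.elts j) w ≤ eqVal (z.elts k) w) :
    eqVal y z ⊓ memVal w y ≤ memVal w z := by
  rw [memVal, inf_iSup_eq]
  refine iSup_le fun j => ?_
  calc eqVal y z ⊓ (y.val j ⊓ eqVal (y.elts j) w)
      ≤ memVal (y.elts j) z ⊓ eqVal (y.elts j) w := by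
        rw [← inf_assoc]; exact inf_le_inf_right _ (eqVal_inf_val_le_memVal y z j)
    _ = ⨆ k, z.val k ⊓ (eqVal (z.elts k) (y.elts j) ⊓ eqVal (y.elts j) w) := by
        simp only [memVal, iSup_inf_eq, inf_assoc]
    _ ≤ memVal w z := iSup_mono fun k => inf_le_inf_left _ (h j k)

/-- Unfolding `‖x ≈ y‖` and `‖y ≈ z‖` once reduces transitivity at `(x, y, z)` to transitivity
at triples of members `(x_i, y_j, z_k)`, so induction on `x` alone suffices. -/
theorem eqVal_trans (x y z : HName A) : eqVal x y ⊓ eqVal y z ≤ eqVal x z := by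
  induction x generalizing y z with
  | mk κ e a ih =>
    have ih' : ∀ i y z, eqVal z y ⊓ eqVal y (e i) ≤ eqVal z (e i) := fun i y z => by
      simpa only [eqVal_comm, inf_comm] using ih i y z
    rw [eqVal_eq (mk κ e a) z]
    refine le_inf (le_iInf fun i => le_himp_iff.mpr ?_) (le_iInf fun k => le_himp_iff.mpr ?_)
    · calc eqVal (mk κ e a) y ⊓ eqVal y z ⊓ a i
          = eqVal y z ⊓ (eqVal (mk κ e a) y ⊓ a i) := by ac_rfl
        _ ≤ eqVal y z ⊓ memVal (e i) y := inf_le_inf_left _ (eqVal_inf_val_le_memVal _ y i)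
        _ ≤ memVal (e i) z := eqVal_inf_memVal_le_of_trans fun j k => ih' i _ _
    · calc eqVal (mk κ e a) y ⊓ eqVal y z ⊓ z.val k
          = eqVal y (mk κ e a) ⊓ (eqVal z y ⊓ z.val k) := by
            rw [eqVal_comm (mk κ e a) y, eqVal_comm y z]; ac_rfl
        _ ≤ eqVal y (mk κ e a) ⊓ memVal (z.elts k) y :=
            inf_le_inf_left _ (eqVal_inf_val_le_memVal z y k)
        _ ≤ memVal (z.elts k) (mk κ e a) := eqVal_inf_memVal_le_of_trans fun j i => ih i _ _

theorem eqVal_inf_memVal_le (x y z : HName A) : eqVal x y ⊓ memVal z x ≤ memVal z y :=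
  eqVal_inf_memVal_le_of_trans fun j k => eqVal_trans (y.elts k) (x.elts j) z

-- `subsetVal` and `powerset` are reducible so that `memVal_powerset` rewrites their unfolded forms.
noncomputable abbrev subsetVal (v u : HName A) : A :=
  ⨅ z : HName A, memVal z v ⇨ memVal z u

theorem subsetVal_inf_eqVal_le (w v u : HName A) : subsetVal w u ⊓ eqVal w v ≤ subsetVal v u := by
  refine le_iInf fun z => le_himp_iff.mpr ?_
  calc subsetVal w u ⊓ eqVal w v ⊓ memVal z v
      ≤ (memVal z w ⇨ memVal z u) ⊓ memVal z w := by
        rw [inf_assoc, eqVal_comm]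
        exact inf_le_inf (iInf_le _ z) (eqVal_inf_memVal_le v w z)
    _ ≤ memVal z u := himp_inf_le

noncomputable def inter (u v : HName A) : HName A :=
  mk u.ι u.elts fun i => u.val i ⊓ memVal (u.elts i) v

theorem subsetVal_inter_left (u v : HName A) : subsetVal (inter u v) u = ⊤ := by
  refine eq_top_iff.mpr (le_iInf fun z => le_himp_iff.mpr (inf_le_right.trans ?_))
  exact iSup_mono fun i => inf_le_inf_right _ inf_le_left

theorem subsetVal_le_eqVal_inter (u v : HName A) : subsetVal v u ≤ eqVal (inter u v) v := by
  rw [eqVal_eq]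
  refine le_inf (le_iInf fun i => le_himp_iff.mpr (inf_le_right.trans inf_le_right))
    (le_iInf fun j => le_himp_iff.mpr ?_)
  have hj : subsetVal v u ⊓ v.val j ≤ memVal (v.elts j) u :=
    (inf_le_inf (iInf_le _ (v.elts j)) (val_le_memVal v j)).trans himp_inf_le
  calc subsetVal v u ⊓ v.val j
      ≤ memVal (v.elts j) u ⊓ v.val j := le_inf hj inf_le_right
    _ = ⨆ i, u.val i ⊓ eqVal (u.elts i) (v.elts j) ⊓ v.val j := iSup_inf_eq _ _
    _ ≤ memVal (v.elts j) (inter u v) := iSup_mono fun i => ?_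
  have hi : v.val j ⊓ eqVal (u.elts i) (v.elts j) ≤ memVal (u.elts i) v := by
    rw [eqVal_comm]; exact val_inf_eqVal_le_memVal (u.elts i) v j
  refine le_inf (le_inf (inf_le_left.trans inf_le_left) (le_trans ?_ hi))
    (inf_le_left.trans inf_le_right)
  rw [inf_comm (v.val j)]
  exact inf_le_inf_right _ inf_le_right

noncomputable abbrev powerset (u : HName A) : HName A :=
  mk (u.ι → A) (fun f => mk u.ι u.elts f) fun f => subsetVal (mk u.ι u.elts f) u

theorem memVal_powerset (u v : HName A) : memVal v (powerset u) = subsetVal v u := by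
  refine le_antisymm (iSup_le fun f => subsetVal_inf_eqVal_le _ v u) ?_
  calc subsetVal v u ≤ subsetVal (inter u v) u ⊓ eqVal (inter u v) v := by
        rw [subsetVal_inter_left, top_inf_eq]; exact subsetVal_le_eqVal_inter u v
    _ ≤ memVal v (powerset u) := le_iSup_of_le (inter u v).val le_rfl

end HName

open HName in
/-- Validity of Powerset: for a name `u`, the name `w` whose domain consists of all
functions `f : dom u → A` (regarded as names with domain `dom u`), with
`w(f) = ‖∀y(y∈f → y∈u)‖`, satisfies `‖v ∈ w‖ = ‖∀y(y∈v → y∈u)‖` for every name `v`;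
in particular `‖∀z(z∈w ↔ ∀y(y∈z → y∈u))‖ = 1` and the Powerset axiom
`∀x∃w∀z(z∈w ↔ ∀y∈z(y∈x))` is valid in `V^A`. -/
theorem powerset_valid {A : Type u} [Order.Frame A] (u : HName A) :
    (∀ v : HName A,
        memVal v
            (HName.mk (u.ι → A) (fun f => HName.mk u.ι u.elts f)
              (fun f => ⨅ z : HName A,
                memVal z (HName.mk u.ι u.elts f) ⇨ memVal z u)) =
          ⨅ z : HName A, memVal z v ⇨ memVal z u) ∧
      ((⨅ v : HName A,
          (memVal v
              (HName.mk (u.ι → A) (fun f => HName.mk u.ι u.elts f)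
                (fun f => ⨅ z : HName A,
                  memVal z (HName.mk u.ι u.elts f) ⇨ memVal z u)) ⇨
            ⨅ z : HName A, memVal z v ⇨ memVal z u) ⊓
          ((⨅ z : HName A, memVal z v ⇨ memVal z u) ⇨
            memVal v
              (HName.mk (u.ι → A) (fun f => HName.mk u.ι u.elts f)
                (fun f => ⨅ z : HName A,
                  memVal z (HName.mk u.ι u.elts f) ⇨ memVal z u)))) = ⊤) ∧
      ((⨅ x : HName A, ⨆ w : HName A, ⨅ z : HName A,
          (memVal z w ⇨ ⨅ y : HName A, memVal y z ⇨ memVal y x) ⊓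
            ((⨅ y : HName A, memVal y z ⇨ memVal y x) ⇨ memVal z w)) = ⊤) := by
  refine ⟨memVal_powerset u, ?_, ?_⟩
  · simp [memVal_powerset]
  · refine eq_top_iff.mpr (le_iInf fun x => le_iSup_of_le (powerset x) ?_)
    simp [memVal_powerset]
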